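/- arXiv:1903.04922 — 2 statements merged into one kernel-verified Lean document; each statement's English description precedes it below -/
import Mathlib

section
/- Let N ≥ 2, k, ℓ, α real with α ∈ (-1,0), ℓ+N+α > 0, k+N+α > 0, and suppose kN < ℓ(N-1) - α. Let Ω(t) be the unit ball in ℝ^N centered at (0,…,0,t). Then the isoperimetric ratio R(Ω(t)) := P(Ω(t)) / (V(Ω(t)))^{(k+N+α-1)/(ℓ+N+α)}, where P(Ω(t)) = ∫_{∂Ω(t)} |x|^k x_N^α dH^{N-1} and V(Ω(t)) = ∫_{Ω(t)} |x|^ℓ x_N^α dx, tends to 0 as t → +∞. -/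
/-!
For `t ≥ 2r` every point `x` of the ball or sphere of radius `r` around `t e_N` has `‖x‖` and `x_N`
within a factor `2` of `t`, so the weight `‖x‖^p x_N^α` is comparable to `t^(p+α)` uniformly in
`x`, while translation invariance makes the measures of these sets independent of `t`.
Hence `V(Ω(t)) ≍ t^(ℓ+α)` and `P(Ω(t)) = O(t^(k+α))`, so the ratio is `O(t^e)` with
`e = k + α - (ℓ + α)(k + N + α - 1)/(ℓ + N + α)`, and `e < 0` is equivalent to `kN < ℓ(N-1) - α`.
-/

open MeasureTheory Filter Topology Metric Set Asymptotics
open scoped ENNReal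

lemma rpow_le_two_rpow_abs_mul_rpow {y t : ℝ} (p : ℝ) (ht : 0 < t) (h₁ : t ≤ 2 * y)
    (h₂ : y ≤ 2 * t) : y ^ p ≤ 2 ^ |p| * t ^ p := by
  have hy : 0 < y := by linarith
  have hratio : (y / t) ^ p ≤ 2 ^ |p| := by
    rcases le_total 0 p with hp | hp
    · rw [abs_of_nonneg hp]
      exact Real.rpow_le_rpow (by positivity) ((div_le_iff₀ ht).2 h₂) hp
    · rw [abs_of_nonpos hp, Real.rpow_neg zero_le_two, ← Real.inv_rpow zero_le_two]
      exact Real.rpow_le_rpow_of_nonpos (by positivity) ((le_div_iff₀ ht).2 (by linarith)) hp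
  calc y ^ p = (y / t) ^ p * t ^ p := by
        rw [Real.div_rpow hy.le ht.le, div_mul_cancel₀ _ (by positivity)]
    _ ≤ 2 ^ |p| * t ^ p := by gcongr

section SetIntegral

variable {X : Type*} [MeasurableSpace X] {μ : Measure X} {s : Set X} {f : X → ℝ} {a b : ℝ}

lemma norm_setIntegral_le_of_forall_mem_Icc (ha : 0 < a) (h : ∀ x ∈ s, f x ∈ Icc a b) :
    ‖∫ x in s, f x ∂μ‖ ≤ b * μ.real s := by
  -- `0 < a ≤ f` forces `μ s < ∞` when `f` is integrable on `s`; otherwise the integral is `0`.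
  by_cases hf : IntegrableOn f s μ
  · have hμs : μ s < ∞ :=
      calc μ s = μ.restrict s s := (Measure.restrict_apply_self μ s).symm
        _ ≤ μ.restrict s {x | a ≤ ‖f x‖} :=
          measure_mono fun x hx => (h x hx).1.trans (Real.le_norm_self _)
        _ < ∞ := hf.measure_norm_ge_lt_top ha
    refine norm_setIntegral_le_of_norm_le_const hμs fun x hx => ?_
    rw [Real.norm_of_nonneg (ha.le.trans (h x hx).1)]
    exact (h x hx).2
  · rw [integral_undef hf, norm_zero]
    rcases s.eq_empty_or_nonempty with rfl | ⟨x, hx⟩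
    · simp
    · exact mul_nonneg (ha.le.trans ((h x hx).1.trans (h x hx).2)) measureReal_nonneg

end SetIntegral

lemma isTheta_of_eventually_mem_Icc {X : Type*} {l : Filter X} {f g : X → ℝ} {a b : ℝ}
    (ha : 0 < a) (hg : 0 ≤ᶠ[l] g)
    (h : ∀ᶠ x in l, f x ∈ Icc (a * g x) (b * g x)) : f =Θ[l] g := by
  refine ⟨IsBigO.of_bound b ?_, IsBigO.of_bound a⁻¹ ?_⟩ <;>
    filter_upwards [h, hg] with x hx hgx <;>
    rw [Real.norm_of_nonneg hgx, Real.norm_of_nonneg ((mul_nonneg ha.le hgx).trans hx.1)]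
  · exact hx.2
  · rw [le_inv_mul_iff₀ ha]
    exact hx.1

lemma isBigO_div_rpow_of_eventually_mem_Icc {f g : ℝ → ℝ} {a b q c₀ c₁ : ℝ}
    (hf : f =O[atTop] (· ^ a)) (hc₀ : 0 < c₀)
    (hg : ∀ᶠ t in atTop, g t ∈ Icc (c₀ * t ^ b) (c₁ * t ^ b)) :
    (fun t => f t / g t ^ q) =O[atTop] (· ^ (a - b * q)) := by
  have hpos : ∀ᶠ t : ℝ in atTop, 0 < t := eventually_gt_atTop 0
  have hb : 0 ≤ᶠ[atTop] (· ^ b : ℝ → ℝ) := hpos.mono fun t ht => Real.rpow_nonneg ht.le b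
  have hg₀ : 0 ≤ᶠ[atTop] g := (hg.and hb).mono fun t ⟨h, ht⟩ => (mul_nonneg hc₀.le ht).trans h.1
  have hgq := ((isTheta_of_eventually_mem_Icc hc₀ hb hg).rpow hg₀ hb (r := q)).inv
  simp_rw [div_eq_mul_inv]
  refine (hf.mul hgq.isBigO).congr' .rfl ?_
  filter_upwards [hpos] with t ht
  rw [← Real.rpow_mul ht.le, ← Real.rpow_neg ht.le, ← Real.rpow_add ht, sub_eq_add_neg]

section Weight

variable {ι : Type*} [Fintype ι] [DecidableEq ι]

lemma weight_mem_Icc_of_mem_closedBall_single (i : ι) (p α : ℝ) {t r : ℝ} (ht : 0 < t)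
    (hr : 2 * r ≤ t) {x : EuclideanSpace ℝ ι} (hx : x ∈ closedBall (EuclideanSpace.single i t) r) :
    ‖x‖ ^ p * x i ^ α ∈
      Icc ((2 ^ |p| * 2 ^ |α|)⁻¹ * t ^ (p + α)) (2 ^ |p| * 2 ^ |α| * t ^ (p + α)) := by
  rw [mem_closedBall] at hx
  have hcoord : |x i - t| ≤ r := by
    simpa [Real.dist_eq] using (PiLp.dist_apply_le x (EuclideanSpace.single i t) i).trans hx
  have hnorm : |‖x‖ - t| ≤ r := by
    simpa [PiLp.norm_single, abs_of_pos ht, ← dist_eq_norm] using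
      (abs_norm_sub_norm_le x (EuclideanSpace.single i t)).trans hx
  obtain ⟨hc₁, hc₂⟩ := abs_le.mp hcoord
  obtain ⟨hn₁, hn₂⟩ := abs_le.mp hnorm
  have hxi : 0 < x i := by linarith
  have hxn : 0 < ‖x‖ := by linarith
  rw [Real.rpow_add ht]
  constructor
  · rw [inv_mul_le_iff₀ (by positivity)]
    calc t ^ p * t ^ α ≤ (2 ^ |p| * ‖x‖ ^ p) * (2 ^ |α| * x i ^ α) := by
          gcongr
          · exact rpow_le_two_rpow_abs_mul_rpow p hxn (by linarith) (by linarith)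
          · exact rpow_le_two_rpow_abs_mul_rpow α hxi (by linarith) (by linarith)
      _ = 2 ^ |p| * 2 ^ |α| * (‖x‖ ^ p * x i ^ α) := by ring
  · calc ‖x‖ ^ p * x i ^ α ≤ (2 ^ |p| * t ^ p) * (2 ^ |α| * t ^ α) := by
          gcongr
          · exact rpow_le_two_rpow_abs_mul_rpow p ht (by linarith) (by linarith)
          · exact rpow_le_two_rpow_abs_mul_rpow α ht (by linarith) (by linarith)
      _ = 2 ^ |p| * 2 ^ |α| * (t ^ p * t ^ α) := by ring

lemma eventually_setIntegral_ball_weight_mem_Icc (μ : Measure (EuclideanSpace ℝ ι))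
    [μ.IsAddHaarMeasure] (i : ι) (p α : ℝ) {r : ℝ} (hr : 0 < r) :
    ∃ c₀ c₁ : ℝ, 0 < c₀ ∧ ∀ᶠ t in atTop,
      ∫ x in ball (EuclideanSpace.single i t) r, ‖x‖ ^ p * x i ^ α ∂μ ∈
        Icc (c₀ * t ^ (p + α)) (c₁ * t ^ (p + α)) := by
  set C : ℝ := 2 ^ |p| * 2 ^ |α|
  have hball : 0 < μ.real (ball 0 r) :=
    ENNReal.toReal_pos (measure_ball_pos μ 0 hr).ne' measure_ball_lt_top.ne
  refine ⟨μ.real (ball 0 r) * C⁻¹, μ.real (ball 0 r) * C, by positivity, ?_⟩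
  filter_upwards [eventually_ge_atTop (2 * r)] with t ht
  have ht₀ : 0 < t := by linarith
  have hw : ∀ x ∈ ball (EuclideanSpace.single i t) r, ‖x‖ ^ p * x i ^ α ∈
      Icc (C⁻¹ * t ^ (p + α)) (C * t ^ (p + α)) := fun x hx =>
    weight_mem_Icc_of_mem_closedBall_single i p α ht₀ ht (ball_subset_closedBall hx)
  have hw₀ : 0 < C⁻¹ * t ^ (p + α) := by positivity
  have hint : IntegrableOn (fun x : EuclideanSpace ℝ ι => ‖x‖ ^ p * x i ^ α)
      (ball (EuclideanSpace.single i t) r) μ := by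
    refine .of_bound measure_ball_lt_top (by fun_prop) (C * t ^ (p + α))
      (ae_restrict_of_forall_mem measurableSet_ball fun x hx => ?_)
    rw [Real.norm_of_nonneg (hw₀.le.trans (hw x hx).1)]
    exact (hw x hx).2
  constructor
  · have := setIntegral_ge_of_const_le_real measurableSet_ball measure_ball_lt_top.ne
      (fun x hx => (hw x hx).1) hint
    rw [Measure.addHaar_real_ball_center] at this
    linarith
  · have := (le_abs_self _).trans (norm_setIntegral_le_of_forall_mem_Icc (μ := μ) hw₀ hw)
    rw [Measure.addHaar_real_ball_center] at this
    linarith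

lemma setIntegral_sphere_weight_isBigO (μ : Measure (EuclideanSpace ℝ ι))
    [μ.IsAddLeftInvariant] (i : ι) (p α r : ℝ) :
    (fun t => ∫ x in sphere (EuclideanSpace.single i t) r, ‖x‖ ^ p * x i ^ α ∂μ)
      =O[atTop] (· ^ (p + α)) := by
  refine IsBigO.of_bound (2 ^ |p| * 2 ^ |α| * μ.real (sphere 0 r)) ?_
  filter_upwards [eventually_ge_atTop (2 * r), eventually_gt_atTop 0] with t ht ht₀
  have hsphere : μ.real (sphere (EuclideanSpace.single i t) r) = μ.real (sphere 0 r) := by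
    rw [measureReal_def, measureReal_def,
      ← measure_vadd μ (EuclideanSpace.single i t) (sphere 0 r), vadd_sphere, vadd_eq_add, add_zero]
  have := norm_setIntegral_le_of_forall_mem_Icc (μ := μ) (by positivity) fun x hx =>
    weight_mem_Icc_of_mem_closedBall_single i p α ht₀ ht (sphere_subset_closedBall hx)
  rw [hsphere] at this
  rw [Real.norm_of_nonneg (Real.rpow_nonneg ht₀.le _)]
  linarith

end Weight

lemma isoperimetric_exponent_neg {N k ℓ α : ℝ} (hl : 0 < ℓ + N + α)
    (hcond : k * N < ℓ * (N - 1) - α) :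
    k + α - (ℓ + α) * ((k + N + α - 1) / (ℓ + N + α)) < 0 := by
  rw [sub_neg, mul_div_assoc', lt_div_iff₀ hl]
  linarith [show (ℓ + α) * (k + N + α - 1) - (k + α) * (ℓ + N + α) = ℓ * (N - 1) - α - k * N by
    ring]

/-- Under the conditions `α ∈ (-1,0)`, `ℓ+N+α > 0`, `k+N+α > 0`, `kN < ℓ(N-1) - α`,
the weighted isoperimetric ratio of the unit balls `Ω(t) = B₁((0,…,0,t))` tends to `0`
as `t → +∞`; hence the weighted isoperimetric problem has no minimizer. -/
theorem stmt_6 (N : ℕ) (hN : 2 ≤ N) (k ℓ α : ℝ)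
    (hl : 0 < ℓ + N + α)
    (hcond : k * N < ℓ * ((N : ℝ) - 1) - α)
    (c : ℝ → EuclideanSpace ℝ (Fin N))
    (hc : ∀ t, c t = EuclideanSpace.single (⟨N - 1, by omega⟩ : Fin N) t)
    (P V : ℝ → ℝ)
    (hP : ∀ t, P t = ∫ x in Metric.sphere (c t) 1,
        ‖x‖ ^ k * (x (⟨N - 1, by omega⟩ : Fin N)) ^ α ∂μH[(N : ℝ) - 1])
    (hV : ∀ t, V t = ∫ x in Metric.ball (c t) 1,
        ‖x‖ ^ ℓ * (x (⟨N - 1, by omega⟩ : Fin N)) ^ α) :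
    Tendsto (fun t => P t / V t ^ ((k + N + α - 1) / (ℓ + N + α))) atTop (𝓝 0) := by
  simp only [hP, hV, hc]
  set i : Fin N := ⟨N - 1, by omega⟩
  obtain ⟨c₀, c₁, hc₀, hVbounds⟩ := eventually_setIntegral_ball_weight_mem_Icc volume i ℓ α one_pos
  have hratio := isBigO_div_rpow_of_eventually_mem_Icc
    (setIntegral_sphere_weight_isBigO μH[(N : ℝ) - 1] i k α 1) hc₀ hVbounds
    (q := (k + N + α - 1) / (ℓ + N + α))
  refine hratio.trans_tendsto ?_
  simpa using tendsto_rpow_neg_atTop (neg_pos.2 (isoperimetric_exponent_neg hl hcond))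
end

section
/- Let N ≥ 2, and let f, g : ℝ^N → (0,∞) satisfy f(x) ≤ c₁|x|^{-α} and g(x) ≥ c₂|x|^{-β} for |x| ≥ R₁, where α, β, R₁, c₁, c₂ > 0, β ≤ N, and α > β(N-1)/N. Fix d > 0. For t > 0 let z(t) = (t,0,…,0) and choose R(t) > 0 with ∫_{B_{R(t)}(z(t))} g dx = d. Then P_f(B_{R(t)}(z(t))) = ∫_{∂B_{R(t)}(z(t))} f dH^{N-1} → 0 as t → +∞. In particular, the problem of minimizing P_f(M) among measurable sets M with ∫_M g dx = d has no solution (the infimum is 0 and is not attained). -/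
/-!
Since `β ≤ N`, every ball `B(u e₁, u / 2)` with `u ≥ max 1 (2 R₁)` has `g`-mass at least
`c₂ 3⁻ᴺ |B₁|`, however large `u` is. The balls with `u = t 4⁻ᵏ` are pairwise disjoint, so a ball
of `g`-mass `d` centred at `t e₁` contains only boundedly many of them: for a fixed `ε > 0` it
lies in `{ε t ≤ |x| ≤ 2 t}` once `t` is large. There `g ≥ c₂ (2t)^(-β)`, forcing
`R(t)^N ≲ t^β`, and `f ≤ c₁ (ε t)^(-α)`, so the perimeter is at most
`c₁ (ε t)^(-α) R(t)^(N-1) H^(N-1)(S^(N-1)) = O(t^(β (N-1)/N - α)) → 0`.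
`H^(N-1)(S^(N-1))` is finite because the sphere is covered by the radial projections of the faces
of the cube `[-1, 1]^N`, which are Lipschitz images of an `(N-1)`-cube.
-/

open MeasureTheory Filter Topology Metric Module NormedSpace
open scoped ENNReal Pointwise

theorem NormedSpace.lipschitzOnWith_normalize {V : Type*} [NormedAddCommGroup V]
    [NormedSpace ℝ V] : LipschitzOnWith 2 (normalize : V → V) {x | 1 ≤ ‖x‖} := by
  refine LipschitzOnWith.of_dist_le_mul fun x hx y hy => ?_
  simp only [Set.mem_ofPred_eq] at hx hy
  have hx0 : 0 < ‖x‖ := one_pos.trans_le hx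
  have hy0 : 0 < ‖y‖ := one_pos.trans_le hy
  have h₁ : ‖‖x‖⁻¹ • (x - y)‖ ≤ ‖x - y‖ := by
    rw [norm_smul, norm_inv, norm_norm]
    exact mul_le_of_le_one_left (norm_nonneg _) (inv_le_one_of_one_le₀ hx)
  have h₂ : ‖(‖x‖⁻¹ - ‖y‖⁻¹) • y‖ ≤ ‖x - y‖ :=
    calc ‖(‖x‖⁻¹ - ‖y‖⁻¹) • y‖ = |‖y‖ - ‖x‖| / ‖x‖ := by
          rw [norm_smul, Real.norm_eq_abs, inv_sub_inv hx0.ne' hy0.ne', abs_div,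
            abs_of_pos (mul_pos hx0 hy0)]
          field_simp
      _ ≤ |‖y‖ - ‖x‖| := div_le_self (abs_nonneg _) hx
      _ ≤ ‖x - y‖ := by rw [norm_sub_rev x y]; exact abs_norm_sub_norm_le y x
  have hsplit : normalize x - normalize y = ‖x‖⁻¹ • (x - y) + (‖x‖⁻¹ - ‖y‖⁻¹) • y := by
    simp only [normalize, smul_sub, sub_smul]; abel
  rw [dist_eq_norm, dist_eq_norm, hsplit]
  push_cast
  linarith [norm_add_le (‖x‖⁻¹ • (x - y)) ((‖x‖⁻¹ - ‖y‖⁻¹) • y)]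

noncomputable def radialCubeFace {n : ℕ} (i : Fin (n + 1)) (c : ℝ) (y : Fin n → ℝ) :
    EuclideanSpace ℝ (Fin (n + 1)) :=
  normalize (WithLp.toLp 2 (i.insertNth c y))

theorem abs_le_norm_toLp_insertNth {n : ℕ} (i : Fin (n + 1)) (c : ℝ) (y : Fin n → ℝ) :
    |c| ≤ ‖(WithLp.toLp 2 (i.insertNth c y) : EuclideanSpace ℝ (Fin (n + 1)))‖ := by
  simpa using PiLp.norm_apply_le (WithLp.toLp 2 (i.insertNth (α := fun _ => ℝ) c y)) i

theorem exists_lipschitzWith_radialCubeFace {n : ℕ} (i : Fin (n + 1)) {c : ℝ} (hc : |c| = 1) :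
    ∃ K, LipschitzWith K (radialCubeFace (n := n) i c) := by
  have hiso : Isometry (Fin.insertNth (α := fun _ => ℝ) i c) :=
    Isometry.of_dist_eq fun y y' => by
      rw [Fin.dist_insertNth_insertNth, dist_self, max_eq_right dist_nonneg]
  have hface := (PiLp.lipschitzWith_toLp 2 fun _ : Fin (n + 1) => ℝ).comp hiso.lipschitz
  refine ⟨_, lipschitzOnWith_univ.mp <| lipschitzOnWith_normalize.comp hface.lipschitzOnWith
    fun y _ => ?_⟩
  simpa [hc] using abs_le_norm_toLp_insertNth i c y

/-- A point of the sphere lies on the piece indexed by one of its coordinates of largest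
absolute value and the sign of that coordinate. -/
theorem sphere_subset_iUnion_radialCubeFace (n : ℕ) :
    sphere (0 : EuclideanSpace ℝ (Fin (n + 1))) 1 ⊆
      ⋃ i, ⋃ c ∈ ({-1, 1} : Set ℝ), radialCubeFace i c '' closedBall 0 1 := by
  intro u hu
  rw [mem_sphere_zero_iff_norm] at hu
  obtain ⟨i, hi⟩ := Finite.exists_max fun j => |u j|
  have hui : u i ≠ 0 := by
    intro h0
    have hu0 : u = 0 := by
      ext j
      simpa [h0] using hi j
    simp [hu0] at hu
  have ha : 0 < |u i| := abs_pos.mpr hui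
  set x : EuclideanSpace ℝ (Fin (n + 1)) := |u i|⁻¹ • u
  have hxi : x i ∈ ({-1, 1} : Set ℝ) := by
    rcases abs_choice (u i) with h | h <;> simp [x, h, hui]
  simp only [Set.mem_iUnion]
  refine ⟨i, x i, hxi, i.removeNth x.ofLp, ?_, ?_⟩
  · refine mem_closedBall_zero_iff.mpr <| (pi_norm_le_iff_of_nonneg zero_le_one).mpr fun k => ?_
    rw [Fin.removeNth, Real.norm_eq_abs]
    simp only [x, PiLp.smul_apply, smul_eq_mul, abs_mul, abs_inv, abs_abs]
    exact inv_mul_le_one_of_le₀ (hi _) ha.le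
  · rw [radialCubeFace, Fin.insertNth_self_removeNth, WithLp.toLp_ofLp,
      normalize_smul_of_pos (inv_pos.mpr ha), normalize_eq_self_of_norm_eq_one hu]

theorem hausdorffMeasure_sphere_lt_top (n : ℕ) :
    μH[n] (sphere (0 : EuclideanSpace ℝ (Fin (n + 1))) 1) < ∞ := by
  refine (measure_mono (sphere_subset_iUnion_radialCubeFace n)).trans_lt ?_
  refine (measure_iUnion_fintype_le _ _).trans_lt <| ENNReal.sum_lt_top.mpr fun i _ =>
    measure_biUnion_lt_top (Set.toFinite _) fun c hc => ?_
  have hc : |c| = 1 := by rcases hc with rfl | rfl <;> simp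
  obtain ⟨K, hK⟩ := exists_lipschitzWith_radialCubeFace i hc
  have hball : μH[n] (closedBall (0 : Fin n → ℝ) 1) < ∞ := by
    have := hausdorffMeasure_pi_real (ι := Fin n)
    rw [Fintype.card_fin] at this
    exact this ▸ measure_closedBall_lt_top
  exact (hK.hausdorffMeasure_image_le n.cast_nonneg _).trans_lt <|
    ENNReal.mul_lt_top (ENNReal.rpow_lt_top_of_nonneg n.cast_nonneg ENNReal.coe_ne_top) hball

theorem hausdorffMeasure_sphere {E : Type*} [NormedAddCommGroup E] [NormedSpace ℝ E]
    [MeasurableSpace E] [BorelSpace E] (x : E) {r : ℝ} (hr : 0 < r) {s : ℝ} (hs : 0 ≤ s) :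
    μH[s] (sphere x r) = ENNReal.ofReal (r ^ s) * μH[s] (sphere (0 : E) 1) := by
  have hsphere : sphere x r = x +ᵥ r • sphere (0 : E) 1 := by
    rw [smul_sphere' hr.ne', vadd_sphere, smul_zero, vadd_eq_add, add_zero,
      Real.norm_of_nonneg hr.le, mul_one]
  rw [hsphere, ← Set.image_vadd, (isometry_vadd E x).hausdorffMeasure_image (Or.inl hs),
    Measure.hausdorffMeasure_smul₀ hs hr.ne', ENNReal.smul_def, smul_eq_mul,
    ← ENNReal.ofReal_coe_nnreal, NNReal.coe_rpow, coe_nnnorm, Real.norm_of_nonneg hr.le]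

theorem norm_setIntegral_sphere_le {E : Type*} [NormedAddCommGroup E] [NormedSpace ℝ E]
    [MeasurableSpace E] [BorelSpace E] {f : E → ℝ} {α c₁ R₁ : ℝ}
    (hfb : ∀ x, R₁ ≤ ‖x‖ → f x ≤ c₁ * ‖x‖ ^ (-α)) (hf0 : ∀ x, 0 ≤ f x) (hα : 0 ≤ α)
    (hc₁ : 0 ≤ c₁) (hR₁ : 0 < R₁) {e : E} (he : ‖e‖ = 1) {t r ε s : ℝ} (hs : 0 ≤ s)
    (hr : 0 < r) (hfar : R₁ ≤ ε * t) (hnear : r ≤ (1 - ε) * t)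
    (hS : μH[s] (sphere (0 : E) 1) < ∞) :
    ‖∫ x in sphere (t • e) r, f x ∂μH[s]‖ ≤
      c₁ * (ε * t) ^ (-α) * (r ^ s * μH[s].real (sphere (0 : E) 1)) := by
  have hεt : 0 < ε * t := hR₁.trans_le hfar
  have hsphere := hausdorffMeasure_sphere (t • e) hr hs
  have hbound : ∀ x ∈ sphere (t • e) r, ‖f x‖ ≤ c₁ * (ε * t) ^ (-α) := fun x hx => by
    have ht : ‖t • e‖ = t := by
      rw [norm_smul, he, mul_one, Real.norm_of_nonneg (by nlinarith)]
    have hx' : ε * t ≤ ‖x‖ := by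
      have := norm_sub_norm_le (t • e) x
      rw [← dist_eq_norm, dist_comm, mem_sphere.mp hx, ht] at this
      linarith
    rw [Real.norm_of_nonneg (hf0 x)]
    calc f x ≤ c₁ * ‖x‖ ^ (-α) := hfb x (hfar.trans hx')
      _ ≤ c₁ * (ε * t) ^ (-α) :=
        mul_le_mul_of_nonneg_left (Real.rpow_le_rpow_of_nonpos hεt hx' (neg_nonpos.mpr hα)) hc₁
  refine (norm_setIntegral_le_of_norm_le_const (hsphere ▸ ENNReal.mul_lt_top
    ENNReal.ofReal_lt_top hS) hbound).trans_eq ?_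
  rw [measureReal_def, hsphere, ENNReal.toReal_mul, ENNReal.toReal_ofReal (by positivity),
    measureReal_def]

theorem pos_of_setIntegral_ball_ne_zero {X : Type*} [PseudoMetricSpace X] [MeasurableSpace X]
    {μ : Measure X} {g : X → ℝ} {p : X} {r : ℝ} (h : ∫ x in ball p r, g x ∂μ ≠ 0) : 0 < r := by
  by_contra! hr
  rw [ball_eq_empty.mpr hr, Measure.restrict_empty, integral_zero_measure] at h
  exact h rfl

theorem measureReal_ball_pos {X : Type*} [PseudoMetricSpace X] [ProperSpace X]
    [MeasurableSpace X] {μ : Measure X} [μ.IsOpenPosMeasure] [IsFiniteMeasureOnCompacts μ]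
    (p : X) {ρ : ℝ} (hρ : 0 < ρ) : 0 < μ.real (ball p ρ) :=
  ENNReal.toReal_pos (measure_ball_pos μ p hρ).ne' measure_ball_lt_top.ne

theorem inv_three_pow_le_rpow_neg_mul_pow {n : ℕ} {β u : ℝ} (hβ : β ≤ n) (hu : 1 ≤ u) :
    (3 ^ n)⁻¹ ≤ (3 / 2 * u) ^ (-β) * (u / 2) ^ n := by
  have hu0 : 0 < u := one_pos.trans_le hu
  calc ((3 : ℝ) ^ n)⁻¹ = ((3 / 2 * u) ^ n)⁻¹ * (u / 2) ^ n := by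
        rw [inv_mul_eq_div, ← div_pow, ← inv_pow]; congr 1; field_simp
    _ = (3 / 2 * u) ^ (-(n : ℝ)) * (u / 2) ^ n := by
        rw [Real.rpow_neg (by positivity), Real.rpow_natCast]
    _ ≤ (3 / 2 * u) ^ (-β) * (u / 2) ^ n := by
        gcongr
        linarith

theorem dist_smul_smul_of_norm_eq_one {E : Type*} [SeminormedAddCommGroup E] [NormedSpace ℝ E]
    {e : E} (he : ‖e‖ = 1) (a b : ℝ) : dist (a • e) (b • e) = |a - b| := by
  rw [dist_eq_norm, ← sub_smul, norm_smul, he, mul_one, Real.norm_eq_abs]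

section Radius

variable {E : Type*} [NormedAddCommGroup E] [NormedSpace ℝ E] [FiniteDimensional ℝ E]
  [MeasurableSpace E] [BorelSpace E] {μ : Measure E} [μ.IsAddHaarMeasure]
  {g : E → ℝ} {β c₂ R₁ : ℝ}

theorem addHaar_real_ball_of_pos (p : E) {ρ : ℝ} (hρ : 0 < ρ) :
    μ.real (ball p ρ) = ρ ^ finrank ℝ E * μ.real (ball 0 1) := by
  rw [measureReal_def, Measure.addHaar_ball_of_pos μ p hρ, ENNReal.toReal_mul,
    ENNReal.toReal_ofReal (by positivity), measureReal_def]


variable (hgb : ∀ x, R₁ ≤ ‖x‖ → c₂ * ‖x‖ ^ (-β) ≤ g x)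
include hgb

theorem setIntegral_ball_ge (hR₁ : 0 < R₁) (hc₂ : 0 ≤ c₂) (hβ : 0 ≤ β) {p : E} {ρ s : ℝ}
    (hρ : 0 < ρ) (hfar : R₁ ≤ ‖p‖ - ρ) (hs : ‖p‖ + ρ ≤ s) (hint : IntegrableOn g (ball p ρ) μ) :
    c₂ * s ^ (-β) * (ρ ^ finrank ℝ E * μ.real (ball 0 1)) ≤ ∫ x in ball p ρ, g x ∂μ := by
  rw [← addHaar_real_ball_of_pos p hρ]
  refine setIntegral_ge_of_const_le_real measurableSet_ball measure_ball_lt_top.ne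
    (fun x hx => ?_) hint
  have hlow : ‖p‖ - ρ < ‖x‖ := by
    have := norm_sub_norm_le p x
    rw [← dist_eq_norm, dist_comm] at this
    linarith [mem_ball.mp hx]
  have hup : ‖x‖ ≤ s := (norm_lt_of_mem_ball hx).le.trans hs
  calc c₂ * s ^ (-β) ≤ c₂ * ‖x‖ ^ (-β) :=
        mul_le_mul_of_nonneg_left (Real.rpow_le_rpow_of_nonpos ((hR₁.trans_le hfar).trans hlow)
          hup (neg_nonpos.mpr hβ)) hc₂
    _ ≤ g x := hgb x (by linarith)

theorem setIntegral_ball_half_norm_ge (hR₁ : 0 < R₁) (hc₂ : 0 ≤ c₂) (hβ : 0 ≤ β)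
    (hβn : β ≤ finrank ℝ E) {p : E} (hp : 1 ≤ ‖p‖) (hpR : 2 * R₁ ≤ ‖p‖)
    (hint : IntegrableOn g (ball p (‖p‖ / 2)) μ) :
    c₂ * (3 ^ finrank ℝ E)⁻¹ * μ.real (ball 0 1) ≤ ∫ x in ball p (‖p‖ / 2), g x ∂μ :=
  calc c₂ * (3 ^ finrank ℝ E)⁻¹ * μ.real (ball 0 1)
      ≤ c₂ * ((3 / 2 * ‖p‖) ^ (-β) * (‖p‖ / 2) ^ finrank ℝ E) * μ.real (ball 0 1) := by
        gcongr
        exact inv_three_pow_le_rpow_neg_mul_pow hβn hp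
    _ = c₂ * (3 / 2 * ‖p‖) ^ (-β) * ((‖p‖ / 2) ^ finrank ℝ E * μ.real (ball 0 1)) := by ring
    _ ≤ ∫ x in ball p (‖p‖ / 2), g x ∂μ :=
        setIntegral_ball_ge hgb hR₁ hc₂ hβ (by positivity) (by linarith) (by linarith) hint

theorem le_setIntegral_ball_of_le_radius (hg0 : ∀ x, 0 ≤ g x) (hR₁ : 0 < R₁) (hc₂ : 0 ≤ c₂)
    (hβ : 0 ≤ β) (hβn : β ≤ finrank ℝ E) {e : E} (he : ‖e‖ = 1) {t r : ℝ} (K : ℕ)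
    (h1 : 1 ≤ t / 4 ^ K) (h2 : 2 * R₁ ≤ t / 4 ^ K) (hr : t - t / 4 ^ K / 2 ≤ r)
    (hint : IntegrableOn g (ball (t • e) r) μ) :
    K * (c₂ * (3 ^ finrank ℝ E)⁻¹ * μ.real (ball 0 1)) ≤ ∫ x in ball (t • e) r, g x ∂μ := by
  set u : ℕ → ℝ := fun k => t / 4 ^ k
  have ht : 0 < t := (div_pos_iff_of_pos_right (by positivity)).mp (one_pos.trans_le h1)
  have hu_anti : Antitone u := fun k l hkl =>
    div_le_div_of_nonneg_left ht.le (by positivity) (pow_le_pow_right₀ (by norm_num) hkl)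
  have hnorm : ∀ k, ‖u k • e‖ = u k := fun k => by
    rw [norm_smul, he, mul_one, Real.norm_of_nonneg (by positivity)]
  set B : ℕ → Set E := fun k => ball (u k • e) (‖u k • e‖ / 2)
  have hB : ∀ k ∈ Finset.range K, B k ⊆ ball (t • e) r := fun k hk => by
    have : u K ≤ u k := hu_anti (Finset.mem_range.mp hk).le
    have : u k ≤ t := hu_anti (Nat.zero_le k) |>.trans_eq (by simp [u])
    refine ball_subset_ball' ?_
    rw [hnorm, dist_smul_smul_of_norm_eq_one he, abs_of_nonpos (by linarith)]
    linarith
  have hdisj : Pairwise (Function.onFun Disjoint B) :=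
    (pairwise_disjoint_on B).mpr fun k l hkl => by
      have : u l ≤ u k / 4 := (hu_anti hkl).trans_eq (by simp [u, pow_succ]; ring)
      have : 0 < u l := by positivity
      refine ball_disjoint_ball ?_
      rw [hnorm, hnorm, dist_smul_smul_of_norm_eq_one he, abs_of_nonneg (by linarith)]
      linarith
  have hcap : ∀ k ∈ Finset.range K,
      c₂ * (3 ^ finrank ℝ E)⁻¹ * μ.real (ball 0 1) ≤ ∫ x in B k, g x ∂μ := fun k hk => by
    have : u K ≤ u k := hu_anti (Finset.mem_range.mp hk).le
    exact setIntegral_ball_half_norm_ge hgb hR₁ hc₂ hβ hβn (by rw [hnorm]; linarith)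
      (by rw [hnorm]; linarith) (hint.mono_set (hB k hk))
  calc K * (c₂ * (3 ^ finrank ℝ E)⁻¹ * μ.real (ball 0 1))
      ≤ ∑ k ∈ Finset.range K, ∫ x in B k, g x ∂μ := by
        simpa using Finset.card_nsmul_le_sum _ _ _ hcap
    _ = ∫ x in ⋃ k ∈ Finset.range K, B k, g x ∂μ :=
        (integral_biUnion_finset _ (fun _ _ => measurableSet_ball) (hdisj.set_pairwise _)
          fun k hk => hint.mono_set (hB k hk)).symm
    _ ≤ ∫ x in ball (t • e) r, g x ∂μ :=
        setIntegral_mono_set hint (.of_forall fun x => hg0 x) (Set.iUnion₂_subset hB).eventuallyLE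

theorem radius_pow_le_of_setIntegral_ball_le (hR₁ : 0 < R₁) (hc₂ : 0 < c₂) (hβ : 0 ≤ β)
    {e : E} (he : ‖e‖ = 1) {t r ε d : ℝ} (ht : 0 < t) (hr : 0 < r)
    (hfar : R₁ ≤ ε * t) (hnear : r ≤ (1 - ε) * t) (hint : IntegrableOn g (ball (t • e) r) μ)
    (hmass : ∫ x in ball (t • e) r, g x ∂μ ≤ d) :
    r ^ finrank ℝ E ≤ d * 2 ^ β / (c₂ * μ.real (ball 0 1)) * t ^ β := by
  have hω : 0 < μ.real (ball (0 : E) 1) := measureReal_ball_pos 0 one_pos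
  have hte : ‖t • e‖ = t := by rw [norm_smul, he, mul_one, Real.norm_of_nonneg ht.le]
  have hlow := (setIntegral_ball_ge hgb hR₁ hc₂.le hβ hr (s := 2 * t) (by rw [hte]; linarith)
    (by rw [hte]; nlinarith) hint).trans hmass
  have h2t : 0 < (2 * t) ^ β := by positivity
  calc r ^ finrank ℝ E
      = c₂ * (2 * t) ^ (-β) * (r ^ finrank ℝ E * μ.real (ball 0 1)) *
          ((2 * t) ^ β / (c₂ * μ.real (ball 0 1))) := by
        rw [Real.rpow_neg (by positivity)]
        field_simp
    _ ≤ d * ((2 * t) ^ β / (c₂ * μ.real (ball 0 1))) := by gcongr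
    _ = d * 2 ^ β / (c₂ * μ.real (ball 0 1)) * t ^ β := by
        rw [Real.mul_rpow zero_le_two ht.le]
        ring

theorem eventually_radius_bounds (hg0 : ∀ x, 0 ≤ g x) (hR₁ : 0 < R₁) (hc₂ : 0 < c₂)
    (hβ : 0 ≤ β) (hβn : β ≤ finrank ℝ E) {e : E} (he : ‖e‖ = 1) {d : ℝ} (hd : 0 < d)
    {R : ℝ → ℝ} (hRmeas : ∀ t, 0 < t → ∫ x in ball (t • e) (R t), g x ∂μ = d) :
    ∃ ε > 0, ∃ A > 0, ∀ᶠ t in atTop,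
      0 < R t ∧ R₁ ≤ ε * t ∧ R t ≤ (1 - ε) * t ∧ R t ^ finrank ℝ E ≤ A * t ^ β := by
  have hω : 0 < μ.real (ball (0 : E) 1) := measureReal_ball_pos 0 one_pos
  set c₀ := c₂ * (3 ^ finrank ℝ E)⁻¹ * μ.real (ball 0 1)
  have hc₀ : 0 < c₀ := by positivity
  obtain ⟨K, hK⟩ := exists_nat_gt (d / c₀)
  refine ⟨1 / 4 ^ K / 2, by positivity, d * 2 ^ β / (c₂ * μ.real (ball 0 1)), by positivity, ?_⟩
  filter_upwards [eventually_ge_atTop (4 ^ K), eventually_ge_atTop (2 * R₁ * 4 ^ K)]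
    with t h1 h2
  have h4K : (0 : ℝ) < 4 ^ K := by positivity
  have ht : 0 < t := h4K.trans_le h1
  have hint : IntegrableOn g (ball (t • e) (R t)) μ :=
    Integrable.of_integral_ne_zero (by rw [hRmeas t ht]; exact hd.ne')
  have hRt := pos_of_setIntegral_ball_ne_zero (hRmeas t ht ▸ hd.ne')
  have hfar : R₁ ≤ 1 / 4 ^ K / 2 * t := by
    rw [div_div, div_mul_eq_mul_div, one_mul, le_div_iff₀ (by positivity)]
    linarith
  have hnear : R t ≤ (1 - 1 / 4 ^ K / 2) * t := by
    by_contra! hlt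
    have hcaps := le_setIntegral_ball_of_le_radius hgb hg0 hR₁ hc₂.le hβ hβn he K
      ((le_div_iff₀ h4K).mpr (by linarith)) ((le_div_iff₀ h4K).mpr h2)
      (by linarith [show (1 - 1 / 4 ^ K / 2) * t = t - t / 4 ^ K / 2 by ring]) hint
    rw [hRmeas t ht, ← le_div_iff₀ hc₀] at hcaps
    linarith
  exact ⟨hRt, hfar, hnear, radius_pow_le_of_setIntegral_ball_le hgb hR₁ hc₂ hβ he ht
    hRt hfar hnear hint (hRmeas t ht).le⟩

theorem tendsto_setIntegral_sphere_of_setIntegral_ball_eq {f : E → ℝ} {α c₁ : ℝ}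
    (hfb : ∀ x, R₁ ≤ ‖x‖ → f x ≤ c₁ * ‖x‖ ^ (-α)) (hf0 : ∀ x, 0 ≤ f x) (hg0 : ∀ x, 0 ≤ g x)
    (hc₁ : 0 ≤ c₁) (hR₁ : 0 < R₁) (hc₂ : 0 < c₂) (hβ : 0 ≤ β) (hβn : β ≤ finrank ℝ E)
    (hαβ : β * ((finrank ℝ E : ℝ) - 1) / finrank ℝ E < α)
    (hS : μH[(finrank ℝ E : ℝ) - 1] (sphere (0 : E) 1) < ∞) {e : E} (he : ‖e‖ = 1)
    {d : ℝ} (hd : 0 < d) {R : ℝ → ℝ}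
    (hRmeas : ∀ t, 0 < t → ∫ x in ball (t • e) (R t), g x ∂μ = d) :
    Tendsto (fun t => ∫ x in sphere (t • e) (R t), f x ∂μH[(finrank ℝ E : ℝ) - 1])
      atTop (𝓝 0) := by
  obtain ⟨ε, hε, A, hA, hev⟩ := eventually_radius_bounds hgb hg0 hR₁ hc₂ hβ hβn he hd hRmeas
  have : Nontrivial E := nontrivial_of_ne e 0 (norm_ne_zero_iff.mp (by simp [he]))
  set n := finrank ℝ E
  have hn : (0 : ℝ) < n := Nat.cast_pos.mpr finrank_pos
  set s : ℝ := n - 1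
  have hs : 0 ≤ s := sub_nonneg.mpr (Nat.one_le_cast.mpr finrank_pos)
  have hα : 0 ≤ α := (by positivity : 0 ≤ β * s / n).trans hαβ.le
  set C := c₁ * ε ^ (-α) * A ^ (s / n) * μH[s].real (sphere (0 : E) 1)
  have hlim : Tendsto (fun t : ℝ => C * t ^ (-(α - β * s / n))) atTop (𝓝 0) := by
    simpa using (tendsto_rpow_neg_atTop (sub_pos.mpr hαβ)).const_mul C
  refine squeeze_zero_norm' ?_ hlim
  filter_upwards [hev] with t ⟨hRt, hfar, hnear, hpow⟩
  have ht : 0 < t := pos_of_mul_pos_right (hR₁.trans_le hfar) hε.le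
  have hRs : R t ^ s ≤ A ^ (s / n) * t ^ (β * s / n) := by
    calc R t ^ s = (R t ^ n) ^ (s / n) := by
          rw [← Real.rpow_natCast, ← Real.rpow_mul hRt.le, mul_div_cancel₀ _ hn.ne']
      _ ≤ (A * t ^ β) ^ (s / n) := by gcongr
      _ = A ^ (s / n) * t ^ (β * s / n) := by
          rw [Real.mul_rpow hA.le (by positivity), ← Real.rpow_mul ht.le, mul_div_assoc]
  refine (norm_setIntegral_sphere_le hfb hf0 hα hc₁ hR₁ he hs hRt hfar hnear hS).trans ?_
  calc c₁ * (ε * t) ^ (-α) * (R t ^ s * μH[s].real (sphere (0 : E) 1))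
      ≤ c₁ * (ε * t) ^ (-α) *
          (A ^ (s / n) * t ^ (β * s / n) * μH[s].real (sphere (0 : E) 1)) := by
        gcongr
    _ = C * t ^ (-(α - β * s / n)) := by
        rw [Real.mul_rpow hε.le ht.le, neg_sub, sub_eq_add_neg, Real.rpow_add ht]
        ring

end Radius

theorem not_exists_minimizer_of_tendsto_zero {X ι : Type*} {l : Filter ι} [l.NeBot]
    {P : Set X → ℝ} {Adm : Set X → Prop} {B : ι → Set X} (hB : ∀ᶠ i in l, Adm (B i))
    (hP : Tendsto (fun i => P (B i)) l (𝓝 0)) :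
    ¬ ∃ M, Adm M ∧ 0 < P M ∧ ∀ M', Adm M' → P M ≤ P M' := by
  rintro ⟨M, -, hM, hmin⟩
  obtain ⟨i, hi, hlt⟩ := (hB.and (hP.eventually_lt_const hM)).exists
  exact (hmin _ hi).not_gt hlt

/-- If `f(x) ≤ c₁|x|^{-α}` and `g(x) ≥ c₂|x|^{-β}` for `|x| ≥ R₁`, with `β ≤ N` and
`α > β(N-1)/N`, then the weighted perimeter of balls `B_{R(t)}((t,0,…,0))` of fixed
weighted measure `d` tends to `0` as `t → ∞`; in particular the isoperimetric
problem has no solution. -/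
theorem stmt_13 (N : ℕ) (hN : 2 ≤ N)
    (f g : EuclideanSpace ℝ (Fin N) → ℝ)
    (hf0 : ∀ x, 0 < f x) (hg0 : ∀ x, 0 < g x)
    (α β R₁ c₁ c₂ : ℝ) (hβ : 0 < β) (hR₁ : 0 < R₁)
    (hc₁ : 0 < c₁) (hc₂ : 0 < c₂)
    (hfb : ∀ x : EuclideanSpace ℝ (Fin N), R₁ ≤ ‖x‖ → f x ≤ c₁ * ‖x‖ ^ (-α))
    (hgb : ∀ x : EuclideanSpace ℝ (Fin N), R₁ ≤ ‖x‖ → g x ≥ c₂ * ‖x‖ ^ (-β))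
    (hβN : β ≤ N) (hαβ : α > β * ((N : ℝ) - 1) / N)
    (d : ℝ) (hd : 0 < d)
    (z : ℝ → EuclideanSpace ℝ (Fin N))
    (hz : ∀ t, z t = EuclideanSpace.single (⟨0, by omega⟩ : Fin N) t)
    (R : ℝ → ℝ)
    (hRmeas : ∀ t, 0 < t → (∫ x in Metric.ball (z t) (R t), g x) = d) :
    Tendsto (fun t => ∫ x in Metric.sphere (z t) (R t), f x ∂μH[(N : ℝ) - 1])
      atTop (𝓝 0) ∧
    ¬ ∃ M : Set (EuclideanSpace ℝ (Fin N)),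
        (∫ x in M, g x) = d ∧
        0 < (∫ x in frontier M, f x ∂μH[(N : ℝ) - 1]) ∧
        ∀ M' : Set (EuclideanSpace ℝ (Fin N)), (∫ x in M', g x) = d →
          (∫ x in frontier M, f x ∂μH[(N : ℝ) - 1])
            ≤ ∫ x in frontier M', f x ∂μH[(N : ℝ) - 1] := by
  obtain ⟨n, rfl⟩ : ∃ n, N = n + 1 := ⟨N - 1, by omega⟩
  set e := EuclideanSpace.single (0 : Fin (n + 1)) (1 : ℝ)
  have he : ‖e‖ = 1 := by simp [e]
  obtain rfl : z = fun t => t • e := funext fun t => by ext j; simp [hz, e]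
  have hlim := tendsto_setIntegral_sphere_of_setIntegral_ball_eq (μ := volume) hgb hfb
    (fun x => (hf0 x).le) (fun x => (hg0 x).le) hc₁.le hR₁ hc₂ hβ.le (by simpa using hβN)
    (by simpa using hαβ) (by simpa using hausdorffMeasure_sphere_lt_top n) he hd hRmeas
  simp only [finrank_euclideanSpace_fin] at hlim
  refine ⟨hlim, not_exists_minimizer_of_tendsto_zero (eventually_gt_atTop 0 |>.mono hRmeas)
    (hlim.congr' ?_)⟩
  filter_upwards [eventually_gt_atTop 0] with t ht
  have hRt := pos_of_setIntegral_ball_ne_zero (hRmeas t ht ▸ hd.ne')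
  rw [frontier_ball _ hRt.ne']
end
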